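/- Suppose (f_{i,1},...,f_{i,K}), i = 1,...,Q are mutually independent multinomial random vectors, each Multinomial(M, p_i), and a_{i,k} ∈ ℝ are arbitrary fixed constants. Then for every t > 0, P(Σ_{i,k} a_{i,k}(f_{i,k}/M − p_{i,k}) > t) ≤ exp(−(Mt/(4a_max)) min{1, a_max t / (4 Σ_{i,k} a_{i,k}² p_{i,k})}) + exp(−M²t² / (8 Σ_{i,k} a_{i,k}² p_{i,k})), where a_max = max_{i,k} |a_{i,k}|. -/

import Mathlib

open MeasureTheory

/-- The categorical distribution on `Fin K` with probabilities `p`. -/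
noncomputable def catMeasure {K : ℕ} (p : Fin K → ℝ) : Measure (Fin K) :=
  ∑ k, ENNReal.ofReal (p k) • Measure.dirac k

/-- The law of `Q` mutually independent blocks of `M` i.i.d. categorical trials;
the counts of block `i` form a `Multinomial(M, p i)` random vector. -/
noncomputable def multinomialFamily {Q K M : ℕ} (p : Fin Q → Fin K → ℝ) :
    Measure (Fin Q → Fin M → Fin K) :=
  Measure.pi fun i => Measure.pi fun _ : Fin M => catMeasure (p i)

/-- The multinomial count `f_{i,k}`. -/
def mcount {Q K M : ℕ} (ω : Fin Q → Fin M → Fin K) (i : Fin Q) (k : Fin K) : ℕ :=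
  (Finset.univ.filter fun m => ω i m = k).card

/-- `a_max = max_{i,k} |a_{i,k}|`. -/
noncomputable def amaxAbs {Q K : ℕ} (a : Fin (Q + 1) → Fin (K + 1) → ℝ) : ℝ :=
  Finset.univ.sup' Finset.univ_nonempty
    (fun ik : Fin (Q + 1) × Fin (K + 1) => |a ik.1 ik.2|)

/-! Chernoff's method. With `y_{i,k} = a_{i,k} − Σ_{k'} p_{i,k'} a_{i,k'}` the statistic is
`(1/M) Σ_{i,m} y_{i, ω i m}`, a sum of `(Q+1)M` independent centred trial scores bounded by
`2 a_max`. For `2 λ a_max ≤ 1` the estimate `e^x ≤ 1 + x + x²` on `|x| ≤ 1` bounds the moment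
generating function of each score by `exp(λ² Σ_k a_{i,k}² p_{i,k})`, so the tail is at most
`exp(−λMt + λ²M Σ a²p)`. Taking `λ = c/(2 a_max)` with `c = min{1, a_max t/(4 Σ a²p)}` already
gives the first exponential of the bound. -/

open MeasureTheory ProbabilityTheory Finset Real

section Weights

variable {ι : Type*} [Fintype ι] {p : ι → ℝ}

lemma sum_mul_sub_mean (hp1 : ∑ i, p i = 1) (a : ι → ℝ) :
    ∑ i, p i * (a i - ∑ j, p j * a j) = 0 := by
  simp only [mul_sub, sum_sub_distrib, ← sum_mul, hp1, one_mul, sub_self]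

lemma abs_sub_mean_le {a : ι → ℝ} (hp0 : ∀ i, 0 ≤ p i) (hp1 : ∑ i, p i = 1) {A : ℝ}
    (hA : ∀ i, |a i| ≤ A) (i : ι) :
    |a i - ∑ j, p j * a j| ≤ 2 * A := by
  have hmean : |∑ j, p j * a j| ≤ A :=
    calc |∑ j, p j * a j| ≤ ∑ j, p j * |a j| := by
          refine (abs_sum_le_sum_abs _ _).trans_eq (sum_congr rfl fun j _ => ?_)
          rw [abs_mul, abs_of_nonneg (hp0 j)]
      _ ≤ ∑ j, p j * A := sum_le_sum fun j _ => mul_le_mul_of_nonneg_left (hA j) (hp0 j)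
      _ = A := by rw [← sum_mul, hp1, one_mul]
  linarith [abs_sub (a i) (∑ j, p j * a j), hA i]

lemma sum_mul_sub_mean_sq_le (hp1 : ∑ i, p i = 1) (a : ι → ℝ) :
    ∑ i, p i * (a i - ∑ j, p j * a j) ^ 2 ≤ ∑ i, p i * a i ^ 2 := by
  have h : ∀ i, p i * (a i - ∑ j, p j * a j) ^ 2 =
      p i * a i ^ 2 - 2 * (∑ j, p j * a j) * (p i * a i) + (∑ j, p j * a j) ^ 2 * p i :=
    fun i => by ring
  rw [sum_congr rfl fun i _ => h i, sum_add_distrib, sum_sub_distrib, ← mul_sum, ← mul_sum, hp1]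
  nlinarith [sq_nonneg (∑ j, p j * a j)]

lemma sum_mul_exp_le_exp_sq {y : ι → ℝ} (hp0 : ∀ i, 0 ≤ p i) (hp1 : ∑ i, p i = 1)
    (hy : ∑ i, p i * y i = 0) {l : ℝ} (hl : ∀ i, |l * y i| ≤ 1) :
    ∑ i, p i * exp (l * y i) ≤ exp (l ^ 2 * ∑ i, p i * y i ^ 2) :=
  calc ∑ i, p i * exp (l * y i) ≤ ∑ i, p i * (1 + l * y i + (l * y i) ^ 2) :=
        sum_le_sum fun i _ => mul_le_mul_of_nonneg_left
          (by linarith [(abs_le.1 (abs_exp_sub_one_sub_id_le (hl i))).2]) (hp0 i)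
    _ = ∑ i, p i + l * ∑ i, p i * y i + l ^ 2 * ∑ i, p i * y i ^ 2 := by
        simp only [mul_sum, ← sum_add_distrib]
        exact sum_congr rfl fun i _ => by ring
    _ ≤ exp (l ^ 2 * ∑ i, p i * y i ^ 2) := by
        rw [hp1, hy, mul_zero, add_zero, add_comm]
        exact add_one_le_exp _

end Weights

lemma chernoff_exponent_le {A V c t M : ℝ} (hA : 0 < A) (hc : 0 ≤ c) (hcV : c * V ≤ A * t / 4)
    (hM : 0 ≤ M) (hMt : 0 ≤ M * t) :
    -(c / (2 * A)) * (M * t) + (c / (2 * A)) ^ 2 * M * V ≤ -(M * t / (4 * A)) * c :=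
  calc -(c / (2 * A)) * (M * t) + (c / (2 * A)) ^ 2 * M * V
      ≤ -(c / (2 * A)) * (M * t) + c * M * (A * t / 4) / (4 * A ^ 2) := by
        rw [show (c / (2 * A)) ^ 2 * M * V = c * M * (c * V) / (4 * A ^ 2) by field_simp; ring]
        gcongr
    _ = -(M * t / (4 * A)) * c - 3 / 16 * (c * (M * t) / A) := by field_simp; ring
    _ ≤ -(M * t / (4 * A)) * c := by
        have : 0 ≤ c * (M * t) / A := by positivity
        linarith

instance isFiniteMeasure_catMeasure {K : ℕ} (p : Fin K → ℝ) : IsFiniteMeasure (catMeasure p) := by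
  constructor
  rw [catMeasure, Measure.finsetSum_apply]
  exact ENNReal.sum_lt_top.2 fun k _ => by simp

instance isFiniteMeasure_multinomialFamily {Q K M : ℕ} (p : Fin Q → Fin K → ℝ) :
    IsFiniteMeasure (multinomialFamily (M := M) p) := by
  unfold multinomialFamily; infer_instance

lemma integral_catMeasure {K : ℕ} {p : Fin K → ℝ} (hp0 : ∀ k, 0 ≤ p k) (f : Fin K → ℝ) :
    ∫ k, f k ∂catMeasure p = ∑ k, p k * f k := by
  rw [catMeasure, integral_finsetSum_measure fun k _ =>
    Integrable.of_finite.smul_measure ENNReal.ofReal_ne_top]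
  simp [integral_smul_measure, ENNReal.toReal_ofReal (hp0 _)]

lemma integral_multinomialFamily_prod {Q K M : ℕ} {p : Fin Q → Fin K → ℝ}
    (hp0 : ∀ i k, 0 ≤ p i k) (g : Fin Q → Fin K → ℝ) :
    ∫ ω, ∏ i, ∏ m, g i (ω i m) ∂multinomialFamily (M := M) p =
      ∏ i, (∑ k, p i k * g i k) ^ M := by
  rw [multinomialFamily]
  refine (integral_fintype_prod_eq_prod fun i (v : Fin M → Fin K) => ∏ m, g i (v m)).trans
    (prod_congr rfl fun i _ => ?_)
  refine (integral_fintype_prod_eq_prod fun _ => g i).trans ?_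
  simp [integral_catMeasure (hp0 i)]

lemma mgf_sum_multinomialFamily_le {Q K M : ℕ} {p y : Fin Q → Fin K → ℝ}
    (hp0 : ∀ i k, 0 ≤ p i k) (hp1 : ∀ i, ∑ k, p i k = 1) (hy : ∀ i, ∑ k, p i k * y i k = 0)
    {l : ℝ} (hl : ∀ i k, |l * y i k| ≤ 1) :
    mgf (fun ω => ∑ i, ∑ m, y i (ω i m)) (multinomialFamily (M := M) p) l ≤
      exp (l ^ 2 * M * ∑ i, ∑ k, p i k * y i k ^ 2) :=
  calc mgf (fun ω => ∑ i, ∑ m, y i (ω i m)) (multinomialFamily (M := M) p) l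
      = ∏ i, (∑ k, p i k * exp (l * y i k)) ^ M := by
        simp only [mgf, mul_sum, exp_sum]
        exact integral_multinomialFamily_prod hp0 fun i k => exp (l * y i k)
    _ ≤ ∏ i, exp (l ^ 2 * ∑ k, p i k * y i k ^ 2) ^ M := by
        have hnonneg i : 0 ≤ ∑ k, p i k * exp (l * y i k) :=
          sum_nonneg fun k _ => mul_nonneg (hp0 i k) (exp_pos _).le
        exact prod_le_prod (fun i _ => pow_nonneg (hnonneg i) M) fun i _ =>
          pow_le_pow_left₀ (hnonneg i) (sum_mul_exp_le_exp_sq (hp0 i) (hp1 i) (hy i) (hl i)) M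
    _ = exp (l ^ 2 * M * ∑ i, ∑ k, p i k * y i k ^ 2) := by
        simp only [← exp_nat_mul, ← exp_sum]
        rw [mul_sum]
        exact congrArg exp (sum_congr rfl fun i _ => by ring)

lemma sum_mul_mcount {Q K M : ℕ} (ω : Fin Q → Fin M → Fin K) (i : Fin Q) (f : Fin K → ℝ) :
    ∑ k, f k * mcount ω i k = ∑ m, f (ω i m) := by
  rw [← sum_fiberwise univ (ω i) fun m => f (ω i m)]
  refine sum_congr rfl fun k _ => ?_
  rw [sum_congr rfl fun m hm => by rw [(mem_filter.1 hm).2], sum_const, mcount, nsmul_eq_mul,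
    mul_comm]

lemma sum_mul_mcount_div_sub {Q K M : ℕ} (hM : M ≠ 0) (p a : Fin Q → Fin K → ℝ)
    (ω : Fin Q → Fin M → Fin K) :
    ∑ i, ∑ k, a i k * ((mcount ω i k : ℝ) / M - p i k) =
      (∑ i, ∑ m, (a i (ω i m) - ∑ k, p i k * a i k)) / M := by
  rw [sum_div]
  refine sum_congr rfl fun i _ => ?_
  simp only [mul_sub, sum_sub_distrib, mul_div_assoc', ← sum_div, sum_mul_mcount, sum_const,
    card_univ, Fintype.card_fin, nsmul_eq_mul]
  field_simp
  simp only [mul_comm]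

theorem multinomialFamily_tail_le_exp {Q K M : ℕ} (hM : 0 < M) {p : Fin Q → Fin K → ℝ}
    (hp0 : ∀ i k, 0 ≤ p i k) (hp1 : ∀ i, ∑ k, p i k = 1) {a : Fin Q → Fin K → ℝ} {A : ℝ}
    (hA : ∀ i k, |a i k| ≤ A) {l : ℝ} (hl0 : 0 ≤ l) (hlA : 2 * l * A ≤ 1) (t : ℝ) :
    multinomialFamily (M := M) p
        {ω | t < ∑ i, ∑ k, a i k * ((mcount ω i k : ℝ) / M - p i k)} ≤
      ENNReal.ofReal (exp (-l * (M * t) + l ^ 2 * M * ∑ i, ∑ k, a i k ^ 2 * p i k)) := by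
  set μ := multinomialFamily (M := M) p
  set y : Fin Q → Fin K → ℝ := fun i k => a i k - ∑ k', p i k' * a i k'
  set D : (Fin Q → Fin M → Fin K) → ℝ := fun ω => ∑ i, ∑ m, y i (ω i m)
  have hsub : {ω | t < ∑ i, ∑ k, a i k * ((mcount ω i k : ℝ) / M - p i k)} ⊆
      {ω | M * t ≤ D ω} := fun ω hω => by
    rw [Set.mem_ofPred_eq, sum_mul_mcount_div_sub hM.ne', lt_div_iff₀ (by positivity)] at hω
    exact (mul_comm (M : ℝ) t).trans_le hω.le
  have hly : ∀ i k, |l * y i k| ≤ 1 := fun i k => by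
    rw [abs_mul, abs_of_nonneg hl0]
    calc l * |y i k| ≤ l * (2 * A) := by gcongr; exact abs_sub_mean_le (hp0 i) (hp1 i) (hA i) k
      _ ≤ 1 := by linarith
  have hvar : ∑ i, ∑ k, p i k * y i k ^ 2 ≤ ∑ i, ∑ k, a i k ^ 2 * p i k := by
    calc ∑ i, ∑ k, p i k * y i k ^ 2 ≤ ∑ i, ∑ k, p i k * a i k ^ 2 :=
          sum_le_sum fun i _ => sum_mul_sub_mean_sq_le (hp1 i) (a i)
      _ = ∑ i, ∑ k, a i k ^ 2 * p i k :=
          sum_congr rfl fun i _ => sum_congr rfl fun k _ => mul_comm _ _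
  calc μ {ω | t < ∑ i, ∑ k, a i k * ((mcount ω i k : ℝ) / M - p i k)}
      ≤ ENNReal.ofReal (μ.real {ω | M * t ≤ D ω}) := by
        rw [ofReal_measureReal]; exact measure_mono hsub
    _ ≤ ENNReal.ofReal (exp (-l * (M * t)) * mgf D μ l) :=
        ENNReal.ofReal_le_ofReal (measure_ge_le_exp_mul_mgf _ hl0 .of_finite)
    _ ≤ ENNReal.ofReal (exp (-l * (M * t)) * exp (l ^ 2 * M * ∑ i, ∑ k, p i k * y i k ^ 2)) := by
        gcongr
        exact mgf_sum_multinomialFamily_le hp0 hp1 (fun i => sum_mul_sub_mean (hp1 i) (a i)) hly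
    _ ≤ ENNReal.ofReal (exp (-l * (M * t) + l ^ 2 * M * ∑ i, ∑ k, a i k ^ 2 * p i k)) := by
        rw [← exp_add]
        gcongr

/-- two-sided-coefficient concentration for linear functionals of
independent multinomial random vectors:
`P(Σ_{i,k} a_{i,k}(f_{i,k}/M − p_{i,k}) > t)
  ≤ exp(−(Mt/(4a_max)) min{1, a_max t/(4 Σ a²p)}) + exp(−M²t²/(8 Σ a²p))`. -/
theorem multinomial_general_tail {Q K M : ℕ} (hM : 0 < M)
    (p : Fin (Q + 1) → Fin (K + 1) → ℝ)
    (hp0 : ∀ i k, 0 ≤ p i k) (hp1 : ∀ i, ∑ k, p i k = 1)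
    (a : Fin (Q + 1) → Fin (K + 1) → ℝ) (hamax : 0 < amaxAbs a)
    (hap2 : 0 < ∑ i, ∑ k, (a i k) ^ 2 * p i k)
    (t : ℝ) (ht : 0 < t) :
    multinomialFamily (M := M) p
        {ω | t < ∑ i, ∑ k, a i k * ((mcount ω i k : ℝ) / M - p i k)} ≤
      ENNReal.ofReal (Real.exp (-(M * t / (4 * amaxAbs a)) *
          min 1 (amaxAbs a * t / (4 * ∑ i, ∑ k, (a i k) ^ 2 * p i k))) +
        Real.exp (-((M : ℝ) ^ 2 * t ^ 2) /
          (8 * ∑ i, ∑ k, (a i k) ^ 2 * p i k))) := by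
  set A := amaxAbs a
  set V := ∑ i, ∑ k, (a i k) ^ 2 * p i k
  set c := min 1 (A * t / (4 * V))
  have hc : 0 ≤ c := le_min zero_le_one (by positivity)
  have hcV : c * V ≤ A * t / 4 :=
    calc c * V ≤ A * t / (4 * V) * V := by gcongr; exact min_le_right _ _
      _ = A * t / 4 := by field_simp
  have hlA : 2 * (c / (2 * A)) * A ≤ 1 :=
    calc 2 * (c / (2 * A)) * A = c := by field_simp
      _ ≤ 1 := min_le_left _ _
  have hA : ∀ i k, |a i k| ≤ A := fun i k =>
    le_sup' (fun ik : Fin (Q + 1) × Fin (K + 1) => |a ik.1 ik.2|) (mem_univ (i, k))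
  calc _ ≤ ENNReal.ofReal (exp (-(c / (2 * A)) * (M * t) + (c / (2 * A)) ^ 2 * M * V)) :=
        multinomialFamily_tail_le_exp hM hp0 hp1 hA (by positivity) hlA t
    _ ≤ ENNReal.ofReal (exp (-(M * t / (4 * A)) * c)) := by
        gcongr
        exact chernoff_exponent_le hamax hc hcV (by positivity) (by positivity)
    _ ≤ _ := by
        gcongr
        exact le_add_of_nonneg_right (exp_pos _).le
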